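/- Under the assumptions y_i > 0 for i < n, z_i ≥ 0 for i < n, y_n = 0, z_n > 0, and y_k = z_k > 0 for some k > 1: if w > 0 satisfies P(w,y,z) = 0, then (∂P/∂y_k + ∂P/∂z_k)|_{λ=w} < 0. -/

import Mathlib

/-!
`P` is affine in `y_k` and in `z_k`, so both partial derivatives are read off term by term:
a factor `λ + y_k` (in `P_1` and in `P_j`, `j < k`) contributes `P_j / (w + y_k)`, a factor
`y_k` (in `P_j`, `j > k`) contributes `P_j / y_k`, and `z_k` contributes `-P_k / z_k`.
At a root `w`, `P_1 - ∑_{j<k} P_j = P_k + ∑_{j>k} P_j =: Q > 0`, so with `z_k = y_k` the sum of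
the two derivatives is `Q / (w + y_k) - Q / y_k < 0`.
-/

open Finset

/-- The characteristic polynomial `P(λ, y, z)` of the matrix `M(y,z)`
(indices `0`-based: `0` is the paper's index `1`, `⊤` the paper's index `n`). -/
noncomputable def charP (n : ℕ) [NeZero n] (lam : ℝ) (y z : Fin n → ℝ) : ℝ :=
  (lam + y 0 - z 0) * ∏ i ∈ Finset.Ioi (0 : Fin n), (lam + y i)
    - ∑ j ∈ Finset.Ioi (0 : Fin n),
        (∏ i ∈ Finset.Iio j, y i) * z j * ∏ i ∈ Finset.Ioi j, (lam + y i)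

theorem Finset.sum_Ioi_eq_sum_Ioo_add_add_sum_Ioi {α M : Type*} [LinearOrder α]
    [LocallyFiniteOrder α] [LocallyFiniteOrderTop α] [AddCommMonoid M] {a k : α} (h : a < k)
    (f : α → M) : ∑ j ∈ Ioi a, f j = ∑ j ∈ Ioo a k, f j + f k + ∑ j ∈ Ioi k, f j := by
  have hunion : Ioc a k ∪ Ioi k = Ioi a := by
    rw [← coe_inj, coe_union, coe_Ioc, coe_Ioi, coe_Ioi, Set.Ioc_union_Ioi_eq_Ioi h.le]
  have hdisj : Disjoint (Ioc a k) (Ioi k) := by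
    rw [← disjoint_coe, coe_Ioc, coe_Ioi]; exact Set.Ioc_disjoint_Ioi_same
  rw [← hunion, sum_union hdisj, ← Ioo_insert_right h, sum_insert right_notMem_Ioo, add_comm (f k)]

section Update

variable {ι : Type*} [DecidableEq ι] (T : Finset ι) (y : ι → ℝ) {k : ι}

theorem Finset.prod_comp_update_of_notMem (F : ℝ → ℝ) (hk : k ∉ T) (s : ℝ) :
    ∏ i ∈ T, F (Function.update y k s i) = ∏ i ∈ T, F (y i) := by
  simp only [← Function.comp_apply (f := F), Function.comp_update, prod_update_of_notMem hk]

theorem hasDerivAt_prod_comp_update_of_mem {F : ℝ → ℝ} {F' : ℝ} (hF : HasDerivAt F F' (y k))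
    (hk : k ∈ T) (hFk : F (y k) ≠ 0) :
    HasDerivAt (fun s => ∏ i ∈ T, F (Function.update y k s i))
      (F' * (∏ i ∈ T, F (y i)) / F (y k)) (y k) := by
  have hfun : (fun s => ∏ i ∈ T, F (Function.update y k s i))
      = fun s => F s * ∏ i ∈ T.erase k, F (y i) := by
    funext s
    rw [← mul_prod_erase T _ hk, Function.update_self,
      prod_comp_update_of_notMem _ y F (notMem_erase k T)]
  rw [hfun, ← mul_prod_erase T _ hk]
  exact (hF.mul_const _).congr_deriv (by field_simp)

end Update

/-- The paper's `P_1`; `charTerm λ y z j` is its `P_j`. -/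
noncomputable def charLead (n : ℕ) [NeZero n] (lam : ℝ) (y z : Fin n → ℝ) : ℝ :=
  (lam + y 0 - z 0) * ∏ i ∈ Ioi (0 : Fin n), (lam + y i)

noncomputable def charTerm {n : ℕ} (lam : ℝ) (y z : Fin n → ℝ) (j : Fin n) : ℝ :=
  (∏ i ∈ Iio j, y i) * z j * ∏ i ∈ Ioi j, (lam + y i)

theorem charP_eq {n : ℕ} [NeZero n] (lam : ℝ) (y z : Fin n → ℝ) :
    charP n lam y z = charLead n lam y z - ∑ j ∈ Ioi 0, charTerm lam y z j :=
  rfl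

section CharTerm

variable {n : ℕ} (lam : ℝ) (y z : Fin n → ℝ) {j k : Fin n}

theorem charTerm_nonneg (hlam : 0 ≤ lam) (hy : ∀ i, 0 ≤ y i) (hz : 0 ≤ z j) :
    0 ≤ charTerm lam y z j :=
  mul_nonneg (mul_nonneg (prod_nonneg fun i _ => hy i) hz)
    (prod_nonneg fun i _ => add_nonneg hlam (hy i))

theorem charTerm_pos (hlam : 0 < lam) (hy : ∀ i, 0 ≤ y i) (hyj : ∀ i < j, 0 < y i)
    (hz : 0 < z j) : 0 < charTerm lam y z j :=
  mul_pos (mul_pos (prod_pos fun i hi => hyj i (mem_Iio.1 hi)) hz)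
    (prod_pos fun i _ => add_pos_of_pos_of_nonneg hlam (hy i))

theorem charTerm_update_y_self (s : ℝ) :
    charTerm lam (Function.update y k s) z k = charTerm lam y z k := by
  simp only [charTerm, prod_update_of_notMem notMem_Iio_self,
    prod_comp_update_of_notMem _ y (lam + ·) notMem_Ioi_self]

theorem hasDerivAt_charTerm_update_y_of_lt (hjk : j < k) (hk : lam + y k ≠ 0) :
    HasDerivAt (fun s => charTerm lam (Function.update y k s) z j)
      (charTerm lam y z j / (lam + y k)) (y k) := by
  have hlow : k ∉ Iio j := by simpa using hjk.le
  simp only [charTerm, prod_update_of_notMem hlow]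
  have hhigh := hasDerivAt_prod_comp_update_of_mem (Ioi j) y (F := (lam + ·))
    ((hasDerivAt_id' _).const_add lam) (mem_Ioi.2 hjk) hk
  exact (hhigh.const_mul ((∏ i ∈ Iio j, y i) * z j)).congr_deriv (by ring)

theorem hasDerivAt_charTerm_update_y_of_gt (hkj : k < j) (hk : y k ≠ 0) :
    HasDerivAt (fun s => charTerm lam (Function.update y k s) z j)
      (charTerm lam y z j / y k) (y k) := by
  have hhigh : k ∉ Ioi j := by simpa using hkj.le
  simp only [charTerm, prod_comp_update_of_notMem _ y (lam + ·) hhigh]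
  have hlow := hasDerivAt_prod_comp_update_of_mem (Iio j) y (F := id)
    (hasDerivAt_id _) (mem_Iio.2 hkj) hk
  simp only [id] at hlow
  exact ((hlow.mul_const (z j)).mul_const _).congr_deriv (by ring)

theorem hasDerivAt_charTerm_update_z (j : Fin n) (hk : z k ≠ 0) :
    HasDerivAt (fun s => charTerm lam y (Function.update z k s) j)
      (if j = k then charTerm lam y z k / z k else 0) (z k) := by
  rcases eq_or_ne j k with rfl | hjk
  · simp only [charTerm, Function.update_self, if_true]
    exact (((hasDerivAt_id' _).const_mul _).mul_const _).congr_deriv (by field_simp)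
  · simp only [charTerm, Function.update_of_ne hjk, if_neg hjk]
    exact hasDerivAt_const _ _

end CharTerm

section CharP

variable {n : ℕ} [NeZero n] (lam : ℝ) (y z : Fin n → ℝ) {k : Fin n}

theorem hasDerivAt_charLead_update_y (hk0 : 0 < k) (hk : lam + y k ≠ 0) :
    HasDerivAt (fun s => charLead n lam (Function.update y k s) z)
      (charLead n lam y z / (lam + y k)) (y k) := by
  simp only [charLead, Function.update_of_ne hk0.ne]
  have hprod := hasDerivAt_prod_comp_update_of_mem (Ioi 0) y (F := (lam + ·))
    ((hasDerivAt_id' _).const_add lam) (mem_Ioi.2 hk0) hk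
  exact (hprod.const_mul (lam + y 0 - z 0)).congr_deriv (by ring)

theorem hasDerivAt_charP_update_y (hk0 : 0 < k) (hlk : lam + y k ≠ 0) (hk : y k ≠ 0) :
    HasDerivAt (fun s => charP n lam (Function.update y k s) z)
      ((charLead n lam y z - ∑ j ∈ Ioo 0 k, charTerm lam y z j) / (lam + y k)
        - (∑ j ∈ Ioi k, charTerm lam y z j) / y k) (y k) := by
  simp only [charP_eq, sum_Ioi_eq_sum_Ioo_add_add_sum_Ioi hk0, charTerm_update_y_self]
  have hlow := HasDerivAt.fun_sum (u := Ioo 0 k) fun j hj =>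
    hasDerivAt_charTerm_update_y_of_lt lam y z (mem_Ioo.1 hj).2 hlk
  have hhigh := HasDerivAt.fun_sum (u := Ioi k) fun j hj =>
    hasDerivAt_charTerm_update_y_of_gt lam y z (mem_Ioi.1 hj) hk
  refine ((hasDerivAt_charLead_update_y lam y z hk0 hlk).fun_sub
    ((hlow.add_const _).fun_add hhigh)).congr_deriv ?_
  rw [sub_div, sum_div, sum_div]
  ring

theorem hasDerivAt_charP_update_z (hk0 : 0 < k) (hk : z k ≠ 0) :
    HasDerivAt (fun s => charP n lam y (Function.update z k s))
      (-(charTerm lam y z k / z k)) (z k) := by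
  have hlead (s : ℝ) : charLead n lam y (Function.update z k s) = charLead n lam y z := by
    simp only [charLead, Function.update_of_ne hk0.ne]
  simp only [charP_eq, hlead]
  have := (hasDerivAt_const (z k) (charLead n lam y z)).fun_sub
    (HasDerivAt.fun_sum (u := Ioi 0) fun j _ => hasDerivAt_charTerm_update_z lam y z j hk)
  rwa [sum_ite_eq', if_pos (mem_Ioi.2 hk0), zero_sub] at this

end CharP

/-- Under the assumptions `yᵢ > 0` (`i < n`), `zᵢ ≥ 0` (`i < n`), `yₙ = 0`,
`zₙ > 0`, and `y_k = z_k > 0` for some `k > 1`: if `w > 0` satisfies `P(w, y, z) = 0`, then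
`(∂P/∂y_k + ∂P/∂z_k)|_{λ=w} < 0`. -/
theorem stmt_14 (n : ℕ) [NeZero n] (y z : Fin n → ℝ)
    (hy : ∀ i : Fin n, i < (⊤ : Fin n) → 0 < y i)
    (hz : ∀ i : Fin n, i < (⊤ : Fin n) → 0 ≤ z i)
    (hyn : y (⊤ : Fin n) = 0) (hzn : 0 < z (⊤ : Fin n))
    (k : Fin n) (hk0 : 0 < k) (hyzk : y k = z k) (hk_pos : 0 < y k)
    (w : ℝ) (hw : 0 < w) (hw_root : charP n w y z = 0) :
    deriv (fun s : ℝ => charP n w (Function.update y k s) z) (y k)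
      + deriv (fun s : ℝ => charP n w y (Function.update z k s)) (z k) < 0 := by
  have hy_nonneg (i : Fin n) : 0 ≤ y i :=
    (le_top (a := i)).lt_or_eq.elim (fun h => (hy i h).le) fun h => h ▸ hyn.ge
  have hz_nonneg (i : Fin n) : 0 ≤ z i :=
    (le_top (a := i)).lt_or_eq.elim (hz i) fun h => h ▸ hzn.le
  have hS : 0 ≤ ∑ j ∈ Ioi k, charTerm w y z j :=
    sum_nonneg fun j _ => charTerm_nonneg w y z hw.le hy_nonneg (hz_nonneg j)
  have hPk : 0 < charTerm w y z k :=
    charTerm_pos w y z hw hy_nonneg (fun i hi => hy i (hi.trans_le le_top)) (hyzk ▸ hk_pos)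
  have hroot : charLead n w y z - ∑ j ∈ Ioo 0 k, charTerm w y z j
      = charTerm w y z k + ∑ j ∈ Ioi k, charTerm w y z j := by
    rw [charP_eq, sum_Ioi_eq_sum_Ioo_add_add_sum_Ioi hk0] at hw_root
    linarith
  rw [(hasDerivAt_charP_update_y w y z hk0 (by positivity) hk_pos.ne').deriv,
    (hasDerivAt_charP_update_z w y z hk0 (hyzk ▸ hk_pos.ne')).deriv, hroot, ← hyzk]
  have hlt := div_lt_div_of_pos_left (add_pos_of_pos_of_nonneg hPk hS) hk_pos
    (lt_add_of_pos_left (y k) hw)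
  have hsplit := add_div (charTerm w y z k) (∑ j ∈ Ioi k, charTerm w y z j) (y k)
  linarith
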